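/- arXiv:2203.12664 — 4 statements merged into one kernel-verified Lean document; each statement's English description precedes it below -/
import Mathlib

section
/- Let P = (1/5)·P₁ + (4/5)·P₂ where P₁ is uniform on [0,1] and P₂ is uniform on [1,2]. Then the optimal set of two-means for P is {11/16, 25/16}, and the corresponding quantization error is V₂ = 317/3840. -/
open MeasureTheory Set

noncomputable def unif (a b : ℝ) : Measure ℝ :=
  (ENNReal.ofReal (b - a))⁻¹ • (volume.restrict (Icc a b))

noncomputable def mix (p : ℝ) (P₁ P₂ : Measure ℝ) : Measure ℝ :=
  ENNReal.ofReal p • P₁ + ENNReal.ofReal (1 - p) • P₂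

noncomputable def distortion (P : Measure ℝ) (γ : Finset ℝ) : ℝ :=
  ∫ x, sInf ((fun c => (x - c) ^ 2) '' (γ : Set ℝ)) ∂P

noncomputable def quantErr (P : Measure ℝ) (n : ℕ) : ℝ :=
  sInf { v | ∃ γ : Finset ℝ, γ.Nonempty ∧ γ.card ≤ n ∧ v = distortion P γ }

def IsOptimal (P : Measure ℝ) (n : ℕ) (γ : Finset ℝ) : Prop :=
  γ.Nonempty ∧ γ.card ≤ n ∧ distortion P γ = quantErr P n

/-!
For a codebook `{a ≤ b}` the Voronoi boundary is `(a + b) / 2`, so on each of the two uniform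
components the distortion integrates in closed form, and it becomes a piecewise polynomial in
`(a, b)` whose pieces depend on where `(a + b) / 2` falls relative to `0`, `1`, `2`. On each piece
`317/3840` is a lower bound by a sum-of-squares certificate. Equality holds at `a = 11/16`,
`b = 25/16`, the centroids of the cells `[0, 9/8]` and `[9/8, 2]`.
-/

open intervalIntegral

theorem integral_sub_sq (t u v : ℝ) :
    ∫ x in u..v, (x - t) ^ 2 = ((v - t) ^ 3 - (u - t) ^ 3) / 3 := by
  have hderiv (x : ℝ) : HasDerivAt (fun y => (y - t) ^ 3 / 3) ((x - t) ^ 2) x := by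
    simpa using (((hasDerivAt_id x).sub_const t).pow 3).div_const 3
  rw [integral_eq_sub_of_hasDerivAt (fun x _ => hderiv x)
    ((by fun_prop : Continuous fun x : ℝ => (x - t) ^ 2).intervalIntegrable _ _)]
  ring

/-- `max u (min ((a + b) / 2) v)` is the Voronoi boundary of `{a, b}` clamped to `[u, v]`. -/
noncomputable def integralMinSq (a b u v : ℝ) : ℝ :=
  ((max u (min ((a + b) / 2) v) - a) ^ 3 - (u - a) ^ 3) / 3 +
    ((v - b) ^ 3 - (max u (min ((a + b) / 2) v) - b) ^ 3) / 3

theorem integral_min_sq_sub_sq {a b u v : ℝ} (hab : a ≤ b) (huv : u ≤ v) :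
    ∫ x in u..v, min ((x - a) ^ 2) ((x - b) ^ 2) = integralMinSq a b u v := by
  set w := max u (min ((a + b) / 2) v)
  have huw : u ≤ w := le_max_left _ _
  have hwv : w ≤ v := max_le huv (min_le_right _ _)
  have hcont : Continuous fun x : ℝ => min ((x - a) ^ 2) ((x - b) ^ 2) := by fun_prop
  have hleft : ∫ x in u..w, min ((x - a) ^ 2) ((x - b) ^ 2) = ∫ x in u..w, (x - a) ^ 2 := by
    refine integral_congr_ae (Filter.Eventually.of_forall fun x hx => min_eq_left ?_)
    rw [uIoc_of_le huw] at hx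
    have hxm : x ≤ (a + b) / 2 := by
      rcases le_max_iff.mp hx.2 with h | h
      · exact absurd hx.1 h.not_gt
      · exact h.trans (min_le_left _ _)
    nlinarith
  have hright : ∫ x in w..v, min ((x - a) ^ 2) ((x - b) ^ 2) = ∫ x in w..v, (x - b) ^ 2 := by
    refine integral_congr_ae (Filter.Eventually.of_forall fun x hx => min_eq_right ?_)
    rw [uIoc_of_le hwv] at hx
    have hmx : (a + b) / 2 ≤ x := by
      rcases min_lt_iff.mp ((le_max_right u _).trans_lt hx.1) with h | h
      · exact h.le
      · exact absurd hx.2 h.not_ge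
    nlinarith
  rw [← integral_add_adjacent_intervals (b := w) (hcont.intervalIntegrable _ _)
    (hcont.intervalIntegrable _ _), hleft, hright, integral_sub_sq, integral_sub_sq, integralMinSq]

theorem integral_unif {a b : ℝ} (hab : a ≤ b) (f : ℝ → ℝ) :
    ∫ x, f x ∂unif a b = (b - a)⁻¹ * ∫ x in a..b, f x := by
  rw [unif, MeasureTheory.integral_smul_measure, integral_of_le hab, integral_Icc_eq_integral_Ioc,
    ENNReal.toReal_inv, ENNReal.toReal_ofReal (sub_nonneg.mpr hab), smul_eq_mul]

theorem integrable_unif {a b : ℝ} (hab : a < b) {f : ℝ → ℝ} (hf : Continuous f) :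
    Integrable f (unif a b) :=
  hf.integrableOn_Icc.smul_measure (by simpa using hab)

theorem integral_mix {p : ℝ} (hp₀ : 0 ≤ p) (hp₁ : p ≤ 1) {P₁ P₂ : Measure ℝ} {f : ℝ → ℝ}
    (hf₁ : Integrable f P₁) (hf₂ : Integrable f P₂) :
    ∫ x, f x ∂mix p P₁ P₂ = p * ∫ x, f x ∂P₁ + (1 - p) * ∫ x, f x ∂P₂ := by
  rw [mix, integral_add_measure (hf₁.smul_measure ENNReal.ofReal_ne_top)
    (hf₂.smul_measure ENNReal.ofReal_ne_top), MeasureTheory.integral_smul_measure,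
    MeasureTheory.integral_smul_measure,
    ENNReal.toReal_ofReal hp₀, ENNReal.toReal_ofReal (sub_nonneg.mpr hp₁), smul_eq_mul,
    smul_eq_mul]

theorem distortion_of_coe_eq_pair {P : Measure ℝ} {γ : Finset ℝ} {a b : ℝ}
    (hγ : (γ : Set ℝ) = {a, b}) :
    distortion P γ = ∫ x, min ((x - a) ^ 2) ((x - b) ^ 2) ∂P := by
  simp only [distortion, hγ, image_pair, csInf_pair]

theorem exists_coe_eq_pair_of_card_le_two {γ : Finset ℝ} (hne : γ.Nonempty) (hcard : γ.card ≤ 2) :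
    ∃ a b, a ≤ b ∧ (γ : Set ℝ) = {a, b} := by
  interval_cases h : γ.card
  · exact absurd h (Finset.card_pos.mpr hne).ne'
  · obtain ⟨a, rfl⟩ := Finset.card_eq_one.mp h
    exact ⟨a, a, le_rfl, by simp⟩
  · obtain ⟨a, b, -, rfl⟩ := Finset.card_eq_two.mp h
    rcases le_total a b with h | h
    · exact ⟨a, b, h, by simp⟩
    · exact ⟨b, a, h, by simp [pair_comm]⟩

theorem isOptimal_of_forall_le {P : Measure ℝ} {n : ℕ} {γ₀ : Finset ℝ} (hne : γ₀.Nonempty)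
    (hcard : γ₀.card ≤ n)
    (hle : ∀ γ : Finset ℝ, γ.Nonempty → γ.card ≤ n → distortion P γ₀ ≤ distortion P γ) :
    IsOptimal P n γ₀ := by
  have hleast : IsLeast { v | ∃ γ : Finset ℝ, γ.Nonempty ∧ γ.card ≤ n ∧ v = distortion P γ }
      (distortion P γ₀) := by
    refine ⟨⟨γ₀, hne, hcard, rfl⟩, ?_⟩
    rintro v ⟨γ, hγ, hγcard, rfl⟩
    exact hle γ hγ hγcard
  exact ⟨hne, hcard, hleast.csInf_eq.symm⟩

theorem distortion_mix_of_coe_eq_pair {γ : Finset ℝ} {a b : ℝ} (hab : a ≤ b)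
    (hγ : (γ : Set ℝ) = {a, b}) :
    distortion (mix (1/5) (unif 0 1) (unif 1 2)) γ =
      1/5 * integralMinSq a b 0 1 + 4/5 * integralMinSq a b 1 2 := by
  have hcont : Continuous fun x : ℝ => min ((x - a) ^ 2) ((x - b) ^ 2) := by fun_prop
  rw [distortion_of_coe_eq_pair hγ, integral_mix (by norm_num) (by norm_num)
    (integrable_unif zero_lt_one hcont) (integrable_unif one_lt_two hcont),
    integral_unif zero_le_one, integral_unif one_le_two,
    integral_min_sq_sub_sq hab zero_le_one, integral_min_sq_sub_sq hab one_le_two]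
  norm_num

theorem le_integralMinSq_mix (a b : ℝ) :
    317/3840 ≤ 1/5 * integralMinSq a b 0 1 + 4/5 * integralMinSq a b 1 2 := by
  unfold integralMinSq
  rcases le_total ((a + b) / 2) 0 with h0 | h0
  · rw [max_eq_left ((min_le_left _ _).trans h0),
      max_eq_left ((min_le_left _ _).trans (h0.trans zero_le_one))]
    nlinarith [sq_nonneg (b - 13/10)]
  rcases le_total ((a + b) / 2) 1 with h1 | h1
  · rw [min_eq_left h1, max_eq_right h0, max_eq_left ((min_le_left _ _).trans h1)]
    nlinarith [sq_nonneg (b - a - 1 - (3/5) * (2 - a - b) - (2 - a - b) ^ 2 / 10),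
      sq_nonneg (2 - a - b),
      mul_nonneg (mul_nonneg (sq_nonneg (2 - a - b)) (by linarith : (0:ℝ) ≤ a + b))
        (by linarith : (0:ℝ) ≤ 7/5 + (2 - a - b) / 10)]
  rcases le_total ((a + b) / 2) 2 with h2 | h2
  · -- the region of the minimizer `a = 11/16`, `b = 25/16`, where the certificate is tight
    rw [min_eq_right h1, max_eq_right zero_le_one, min_eq_left h2, max_eq_right h1]
    nlinarith [sq_nonneg (b - a - 7/8 + (2/5) * (a + b - 9/4) * (1 - (a + b - 9/4))),
      mul_nonneg (mul_nonneg (sq_nonneg (a + b - 9/4)) (by linarith : (0:ℝ) ≤ a + b - 2))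
        (by linarith : (0:ℝ) ≤ 4 - a - b),
      mul_nonneg (sq_nonneg (a + b - 9/4)) (by linarith : (0:ℝ) ≤ a + b - 2),
      sq_nonneg (a + b - 9/4)]
  · rw [min_eq_right h1, max_eq_right zero_le_one, min_eq_right h2, max_eq_right one_le_two]
    nlinarith [sq_nonneg (a - 13/10)]

theorem distortion_mix_optimal :
    distortion (mix (1/5) (unif 0 1) (unif 1 2)) {11/16, 25/16} = 317/3840 := by
  rw [distortion_mix_of_coe_eq_pair (by norm_num) Finset.coe_pair]
  norm_num [integralMinSq]

theorem stmt2 :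
    IsOptimal (mix (1/5) (unif 0 1) (unif 1 2)) 2 {11/16, 25/16} ∧
    quantErr (mix (1/5) (unif 0 1) (unif 1 2)) 2 = 317 / 3840 := by
  have hopt : IsOptimal (mix (1/5) (unif 0 1) (unif 1 2)) 2 {11/16, 25/16} := by
    refine isOptimal_of_forall_le (Finset.insert_nonempty _ _) Finset.card_le_two ?_
    intro γ hne hcard
    obtain ⟨a, b, hab, hγ⟩ := exists_coe_eq_pair_of_card_le_two hne hcard
    rw [distortion_mix_optimal, distortion_mix_of_coe_eq_pair hab hγ]
    exact le_integralMinSq_mix a b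
  exact ⟨hopt, hopt.2.2.symm.trans distortion_mix_optimal⟩
end

section
/- Let P = (2/5)·P₁ + (3/5)·P₂ where P₁ is uniform on [0,1/3] and P₂ is uniform on [2/3,1]. Then the optimal set of one-mean is {17/30} with quantization error V₁ = 313/2700, and the optimal set of two-means is {1/6, 5/6} with quantization error V₂ = 1/108. -/
open MeasureTheory Set

lemma integral_P (f : ℝ → ℝ) (hf : Continuous f) :
    ∫ x, f x ∂(mix (2/5) (unif 0 (1/3)) (unif (2/3) 1))
      = (6/5) * (∫ x in (0:ℝ)..(1/3), f x) + (9/5) * (∫ x in (2/3:ℝ)..1, f x) := by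
  have h1 : Integrable f (volume.restrict (Icc (0:ℝ) (1/3))) := hf.integrableOn_Icc
  have h2 : Integrable f (volume.restrict (Icc (2/3:ℝ) 1)) := hf.integrableOn_Icc
  have e1 : (ENNReal.ofReal ((1:ℝ)/3 - 0))⁻¹ ≠ 0 := by simp
  have e1' : (ENNReal.ofReal ((1:ℝ)/3 - 0))⁻¹ ≠ ⊤ := by
    simp [ENNReal.inv_ne_top]
  have e2 : (ENNReal.ofReal (1 - (2:ℝ)/3))⁻¹ ≠ 0 := by simp
  have e2' : (ENNReal.ofReal (1 - (2:ℝ)/3))⁻¹ ≠ ⊤ := by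
    simp [ENNReal.inv_ne_top]; norm_num
  have p1 : (ENNReal.ofReal ((2:ℝ)/5)) ≠ 0 := by positivity
  have p2 : (ENNReal.ofReal (1 - (2:ℝ)/5)) ≠ 0 := by norm_num
  have I1 : Integrable f (unif 0 (1/3)) := by
    rw [unif, integrable_smul_measure e1 e1']; exact h1
  have I2 : Integrable f (unif (2/3) 1) := by
    rw [unif, integrable_smul_measure e2 e2']; exact h2
  rw [mix, integral_add_measure ((integrable_smul_measure p1 ENNReal.ofReal_ne_top).2 I1)
    ((integrable_smul_measure p2 ENNReal.ofReal_ne_top).2 I2),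
    integral_smul_measure, integral_smul_measure, unif, unif,
    integral_smul_measure, integral_smul_measure]
  rw [integral_Icc_eq_integral_Ioc, integral_Icc_eq_integral_Ioc,
    ← intervalIntegral.integral_of_le (by norm_num : (0:ℝ) ≤ 1/3),
    ← intervalIntegral.integral_of_le (by norm_num : (2:ℝ)/3 ≤ 1)]
  rw [ENNReal.toReal_ofReal (by norm_num), ENNReal.toReal_ofReal (by norm_num),
    ENNReal.toReal_inv, ENNReal.toReal_inv, ENNReal.toReal_ofReal (by norm_num),
    ENNReal.toReal_ofReal (by norm_num)]
  simp only [smul_eq_mul]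
  ring

lemma ftc_sq (a b c : ℝ) : (∫ x in a..b, (x - c)^2) = ((b-c)^3 - (a-c)^3)/3 := by
  have := intervalIntegral.integral_comp_sub_right (a := a) (b := b) (fun x : ℝ => x^2) c
  rw [this, integral_pow]
  norm_num

lemma sinf_pair (x a b : ℝ) :
    sInf ((fun c => (x - c) ^ 2) '' (({a, b} : Finset ℝ) : Set ℝ))
      = min ((x-a)^2) ((x-b)^2) := by
  by_cases h : a = b
  · subst h; simp
  · rw [Finset.coe_pair, Set.image_pair, csInf_pair]

lemma sinf_one (x c : ℝ) :
    sInf ((fun c => (x - c) ^ 2) '' (({c} : Finset ℝ) : Set ℝ)) = (x-c)^2 := by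
  simp

lemma distortion_single (c : ℝ) :
    distortion (mix (2/5) (unif 0 (1/3)) (unif (2/3) 1)) {c}
      = (c - 17/30)^2 + 313/2700 := by
  unfold distortion
  simp_rw [sinf_one]
  rw [integral_P _ (by fun_prop), ftc_sq, ftc_sq]
  ring

lemma distortion_pair_eq (a b : ℝ) :
    distortion (mix (2/5) (unif 0 (1/3)) (unif (2/3) 1)) {a, b}
      = (6/5) * (∫ x in (0:ℝ)..(1/3), min ((x-a)^2) ((x-b)^2))
        + (9/5) * (∫ x in (2/3:ℝ)..1, min ((x-a)^2) ((x-b)^2)) := by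
  unfold distortion
  simp_rw [sinf_pair]
  exact integral_P _ (by fun_prop)

lemma distortion_opt2 :
    distortion (mix (2/5) (unif 0 (1/3)) (unif (2/3) 1)) {1/6, 5/6} = 1/108 := by
  rw [distortion_pair_eq]
  have c1 : (∫ x in (0:ℝ)..(1/3), min ((x-1/6)^2) ((x-5/6)^2))
      = ∫ x in (0:ℝ)..(1/3), (x-1/6)^2 := by
    apply intervalIntegral.integral_congr
    intro x hx
    rw [Set.uIcc_of_le (by norm_num)] at hx
    have := hx.2
    exact min_eq_left (by nlinarith)
  have c2 : (∫ x in (2/3:ℝ)..1, min ((x-1/6)^2) ((x-5/6)^2))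
      = ∫ x in (2/3:ℝ)..1, (x-5/6)^2 := by
    apply intervalIntegral.integral_congr
    intro x hx
    rw [Set.uIcc_of_le (by norm_num)] at hx
    have := hx.1
    exact min_eq_right (by nlinarith)
  rw [c1, c2, ftc_sq, ftc_sq]
  norm_num

lemma cubeD (a b : ℝ) (hab : a ≤ b) (h0 : 4/3 ≤ a + b) (h1 : a + b ≤ 2) :
    (2/5)*((1/3-a)^3 + a^3)
      + (3/5)*(((a+b)/2-a)^3 + (a-2/3)^3 + (1-b)^3 + (b-(a+b)/2)^3) ≥ 1/108 := by
  nlinarith [sq_nonneg (b-a), sq_nonneg (a-1/6), sq_nonneg (b-5/6), sq_nonneg (a+b-4/3),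
    sq_nonneg (2-a-b), sq_nonneg (b-1),
    mul_nonneg (sub_nonneg.2 hab) (sq_nonneg (a-1/6)),
    mul_nonneg (sub_nonneg.2 hab) (sq_nonneg (b-5/6)),
    mul_nonneg (sub_nonneg.2 hab) (sq_nonneg (b-a)),
    mul_nonneg (by linarith : (0:ℝ) ≤ a+b-4/3) (sq_nonneg (b-a)),
    mul_nonneg (by linarith : (0:ℝ) ≤ a+b-4/3) (sq_nonneg (a-1/6)),
    mul_nonneg (by linarith : (0:ℝ) ≤ 2-a-b) (sq_nonneg (b-a)),
    mul_nonneg (by linarith : (0:ℝ) ≤ 2-a-b) (sq_nonneg (a-1/6)),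
    mul_nonneg (mul_nonneg (sub_nonneg.2 hab) (sub_nonneg.2 hab)) (sub_nonneg.2 hab)]

lemma cubeB (a b : ℝ) (hab : a ≤ b) (h0 : 0 ≤ a + b) (h1 : a + b ≤ 2/3) :
    (2/5)*(((a+b)/2-a)^3 + a^3 + (1/3-b)^3 + (b-(a+b)/2)^3)
      + (3/5)*((1-b)^3 + (b-2/3)^3) ≥ 1/108 := by
  nlinarith [sq_nonneg (b-a), sq_nonneg (a+b), sq_nonneg (b-5/6), sq_nonneg (a-1/6),
    sq_nonneg (a+b-2/3), sq_nonneg a, sq_nonneg (b-1/2),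
    mul_nonneg (sub_nonneg.2 hab) h0]

lemma pair_lb (a b : ℝ) (hab : a ≤ b) :
    distortion (mix (2/5) (unif 0 (1/3)) (unif (2/3) 1)) {a, b} ≥ 1/108 := by
  have hcont : Continuous (fun x : ℝ => min ((x-a)^2) ((x-b)^2)) := by fun_prop
  rw [distortion_pair_eq]
  have hminl : ∀ x : ℝ, 2*x ≤ a + b → min ((x-a)^2) ((x-b)^2) = (x-a)^2 := by
    intro x hx
    have h' : (0:ℝ) ≤ a + b - 2*x := by linarith
    have hm := mul_nonneg (sub_nonneg.2 hab) h'
    exact min_eq_left (by nlinarith)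
  have hminr : ∀ x : ℝ, a + b ≤ 2*x → min ((x-a)^2) ((x-b)^2) = (x-b)^2 := by
    intro x hx
    have h' : (0:ℝ) ≤ 2*x - (a+b) := by linarith
    have hm := mul_nonneg (sub_nonneg.2 hab) h'
    exact min_eq_right (by nlinarith)
  have congrI : ∀ (lo hi : ℝ) (g : ℝ → ℝ), lo ≤ hi →
      (∀ x, lo ≤ x → x ≤ hi → min ((x-a)^2) ((x-b)^2) = g x) →
      (∫ x in lo..hi, min ((x-a)^2) ((x-b)^2)) = ∫ x in lo..hi, g x := by
    intro lo hi g hlh hg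
    apply intervalIntegral.integral_congr
    intro x hx
    rw [Set.uIcc_of_le hlh] at hx
    exact hg x hx.1 hx.2
  rcases le_or_gt (a + b) 0 with h0 | h0
  · -- everything served by b
    rw [congrI 0 (1/3) (fun x => (x-b)^2) (by norm_num)
        (fun x h1 h2 => hminr x (by linarith)),
      congrI (2/3) 1 (fun x => (x-b)^2) (by norm_num)
        (fun x h1 h2 => hminr x (by linarith)),
      ftc_sq, ftc_sq]
    nlinarith [sq_nonneg (b - 17/30)]
  rcases le_or_gt (a + b) (2/3) with h1 | h1
  · -- 0 < (a+b)/2 ≤ 1/3 : split first integral at m := (a+b)/2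
    have hm0 : (0:ℝ) ≤ (a+b)/2 := by linarith
    have hm1 : (a+b)/2 ≤ 1/3 := by linarith
    have hsplit : (∫ x in (0:ℝ)..(1/3), min ((x-a)^2) ((x-b)^2))
        = (∫ x in (0:ℝ)..((a+b)/2), min ((x-a)^2) ((x-b)^2))
          + ∫ x in ((a+b)/2)..(1/3), min ((x-a)^2) ((x-b)^2) :=
      (intervalIntegral.integral_add_adjacent_intervals
        (hcont.intervalIntegrable _ _) (hcont.intervalIntegrable _ _)).symm
    rw [hsplit,
      congrI 0 ((a+b)/2) (fun x => (x-a)^2) hm0 (fun x hx1 hx2 => hminl x (by linarith)),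
      congrI ((a+b)/2) (1/3) (fun x => (x-b)^2) hm1 (fun x hx1 hx2 => hminr x (by linarith)),
      congrI (2/3) 1 (fun x => (x-b)^2) (by norm_num) (fun x hx1 hx2 => hminr x (by linarith)),
      ftc_sq, ftc_sq, ftc_sq]
    linarith [cubeB a b hab (by linarith) h1]
  rcases le_or_gt (4/3) (a + b) with h2 | h2
  swap
  · -- 1/3 < m < 2/3 : clean separation
    rw [congrI 0 (1/3) (fun x => (x-a)^2) (by norm_num)
        (fun x hx1 hx2 => hminl x (by linarith)),
      congrI (2/3) 1 (fun x => (x-b)^2) (by norm_num)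
        (fun x hx1 hx2 => hminr x (by linarith)),
      ftc_sq, ftc_sq]
    nlinarith [sq_nonneg (a-1/6), sq_nonneg (b-5/6)]
  rcases le_or_gt (a + b) 2 with h3 | h3
  · -- 2/3 ≤ m ≤ 1 : split second integral at m
    have hm0 : (2/3:ℝ) ≤ (a+b)/2 := by linarith
    have hm1 : (a+b)/2 ≤ 1 := by linarith
    have hsplit : (∫ x in (2/3:ℝ)..1, min ((x-a)^2) ((x-b)^2))
        = (∫ x in (2/3:ℝ)..((a+b)/2), min ((x-a)^2) ((x-b)^2))
          + ∫ x in ((a+b)/2)..1, min ((x-a)^2) ((x-b)^2) :=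
      (intervalIntegral.integral_add_adjacent_intervals
        (hcont.intervalIntegrable _ _) (hcont.intervalIntegrable _ _)).symm
    rw [hsplit,
      congrI 0 (1/3) (fun x => (x-a)^2) (by norm_num) (fun x hx1 hx2 => hminl x (by linarith)),
      congrI (2/3) ((a+b)/2) (fun x => (x-a)^2) hm0 (fun x hx1 hx2 => hminl x (by linarith)),
      congrI ((a+b)/2) 1 (fun x => (x-b)^2) hm1 (fun x hx1 hx2 => hminr x (by linarith)),
      ftc_sq, ftc_sq, ftc_sq]
    linarith [cubeD a b hab h2 h3]
  · -- m ≥ 1 : everything served by a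
    rw [congrI 0 (1/3) (fun x => (x-a)^2) (by norm_num)
        (fun x hx1 hx2 => hminl x (by linarith)),
      congrI (2/3) 1 (fun x => (x-a)^2) (by norm_num)
        (fun x hx1 hx2 => hminl x (by linarith)),
      ftc_sq, ftc_sq]
    nlinarith [sq_nonneg (a - 17/30)]

lemma qe1 : quantErr (mix (2/5) (unif 0 (1/3)) (unif (2/3) 1)) 1 = 313/2700 := by
  unfold quantErr
  have hmem : (313/2700 : ℝ) ∈ { v | ∃ γ : Finset ℝ, γ.Nonempty ∧ γ.card ≤ 1 ∧
      v = distortion (mix (2/5) (unif 0 (1/3)) (unif (2/3) 1)) γ } :=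
    ⟨{17/30}, Finset.singleton_nonempty _, by simp, by rw [distortion_single]; ring⟩
  have hlb : ∀ v ∈ { v | ∃ γ : Finset ℝ, γ.Nonempty ∧ γ.card ≤ 1 ∧
      v = distortion (mix (2/5) (unif 0 (1/3)) (unif (2/3) 1)) γ }, (313/2700 : ℝ) ≤ v := by
    rintro v ⟨γ, hne, hcard, rfl⟩
    obtain ⟨c, rfl⟩ := Finset.card_eq_one.1 (le_antisymm hcard (Finset.card_pos.2 hne))
    rw [distortion_single]
    nlinarith [sq_nonneg (c - 17/30)]
  exact le_antisymm (csInf_le ⟨_, hlb⟩ hmem) (le_csInf ⟨_, hmem⟩ hlb)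

lemma qe2 : quantErr (mix (2/5) (unif 0 (1/3)) (unif (2/3) 1)) 2 = 1/108 := by
  unfold quantErr
  have hmem : (1/108 : ℝ) ∈ { v | ∃ γ : Finset ℝ, γ.Nonempty ∧ γ.card ≤ 2 ∧
      v = distortion (mix (2/5) (unif 0 (1/3)) (unif (2/3) 1)) γ } :=
    ⟨{1/6, 5/6}, Finset.insert_nonempty _ _,
      (Finset.card_insert_le _ _).trans (by simp), distortion_opt2.symm⟩
  have hlb : ∀ v ∈ { v | ∃ γ : Finset ℝ, γ.Nonempty ∧ γ.card ≤ 2 ∧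
      v = distortion (mix (2/5) (unif 0 (1/3)) (unif (2/3) 1)) γ }, (1/108 : ℝ) ≤ v := by
    rintro v ⟨γ, hne, hcard, rfl⟩
    have hpos : 0 < γ.card := Finset.card_pos.2 hne
    interval_cases h : γ.card
    · obtain ⟨c, rfl⟩ := Finset.card_eq_one.1 h
      rw [distortion_single]
      nlinarith [sq_nonneg (c - 17/30)]
    · obtain ⟨a, b, -, rfl⟩ := Finset.card_eq_two.1 h
      rcases le_total a b with hab | hab
      · exact pair_lb a b hab
      · rw [Finset.pair_comm]; exact pair_lb b a hab
  exact le_antisymm (csInf_le ⟨_, hlb⟩ hmem) (le_csInf ⟨_, hmem⟩ hlb)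

theorem stmt13 :
    (IsOptimal (mix (2/5) (unif 0 (1/3)) (unif (2/3) 1)) 1 {17/30} ∧
      quantErr (mix (2/5) (unif 0 (1/3)) (unif (2/3) 1)) 1 = 313 / 2700) ∧
    (IsOptimal (mix (2/5) (unif 0 (1/3)) (unif (2/3) 1)) 2 {1/6, 5/6} ∧
      quantErr (mix (2/5) (unif 0 (1/3)) (unif (2/3) 1)) 2 = 1 / 108) := by
  refine ⟨⟨⟨Finset.singleton_nonempty _, by simp, ?_⟩, qe1⟩,
    ⟨⟨Finset.insert_nonempty _ _, (Finset.card_insert_le _ _).trans (by simp), ?_⟩, qe2⟩⟩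
  · rw [distortion_single, qe1]; ring
  · rw [distortion_opt2, qe2]
end

section
/- Let P = (2/5)·P₁ + (3/5)·P₂ where P₁ is uniform on [0,1/3] and P₂ is uniform on [2/3,1]. Then the optimal set of four-means is {1/12, 1/4, 3/4, 11/12} with quantization error V₄ = 1/432. -/
open MeasureTheory Set

lemma contF (γ : Finset ℝ) (h : γ.Nonempty) :
    Continuous fun x => γ.inf' h (fun c => (x - c)^2) := by
  induction h using Finset.Nonempty.cons_induction with
  | singleton a =>
      simp only [Finset.inf'_singleton]
      exact (continuous_id.sub continuous_const).pow 2
  | cons a s ha hs ih =>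
      have key : ∀ x : ℝ, (Finset.cons a s ha).inf' (Finset.cons_nonempty ha) (fun c => (x - c)^2)
          = min ((x-a)^2) (s.inf' hs (fun c => (x - c)^2)) := by
        intro x; rw [Finset.inf'_cons]
      simp only [key]
      exact Continuous.min ((continuous_id.sub continuous_const).pow 2) ih

lemma sqcont (w : ℝ) : Continuous fun x : ℝ => (x - w)^2 := by fun_prop

lemma int_sq (c u v : ℝ) : ∫ x in u..v, (x - c)^2 = ((v-c)^3 - (u-c)^3)/3 := by
  have := intervalIntegral.integral_comp_sub_right (a := u) (b := v) (fun y => y^2) c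
  rw [this, integral_pow]
  norm_num

lemma int_sq_ge (c u v : ℝ) (huv : u ≤ v) : (v-u)^3/12 ≤ ∫ x in u..v, (x - c)^2 := by
  rw [int_sq]
  nlinarith [mul_nonneg (sq_nonneg ((u-c)+(v-c))) (sub_nonneg.2 huv)]

lemma S1 (k s L : ℝ) (hk : 2 ≤ k) (hs : 0 ≤ s) (hsL : s ≤ L) :
    L^3/(12*k^2) ≤ s^3/(12*(k-1)^2) + (L-s)^3/12 := by
  have hbr : 0 ≤ (k^2-1)*L - k*(k-2)*s := by
    nlinarith [mul_nonneg (mul_nonneg (by linarith : (0:ℝ) ≤ k) (by linarith : (0:ℝ) ≤ k-2)) (sub_nonneg.2 hsL)]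
  have hP : 0 ≤ (k*s-(k-1)*L)^2*((k^2-1)*L - k*(k-2)*s) := mul_nonneg (sq_nonneg _) hbr
  have hk0 : (0:ℝ) < k := by linarith
  have hk1 : (0:ℝ) < k - 1 := by linarith
  have key : s^3/(12*(k-1)^2) + (L-s)^3/12 - L^3/(12*k^2)
      = (k*s-(k-1)*L)^2*((k^2-1)*L - k*(k-2)*s) / (12*k^2*(k-1)^2) := by
    field_simp; ring
  nlinarith [div_nonneg hP (by positivity : (0:ℝ) ≤ 12*k^2*(k-1)^2)]

/-- Main lower bound: k points on the line, interval [u,v]. -/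
lemma key1 : ∀ (n : ℕ) (γ : Finset ℝ) (h : γ.Nonempty), γ.card = n → ∀ u v : ℝ, u ≤ v →
    (v-u)^3/(12 * (n:ℝ)^2) ≤ ∫ x in u..v, γ.inf' h (fun c => (x - c)^2) := by
  intro n
  induction n with
  | zero => intro γ h hc; exact absurd (Finset.card_eq_zero.mp hc) h.ne_empty
  | succ n ih =>
    intro γ h hc u v huv
    rcases Nat.eq_zero_or_pos n with hn | hn
    · -- singleton
      subst hn
      obtain ⟨a, rfl⟩ := Finset.card_eq_one.mp hc
      simp only [Finset.inf'_singleton]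
      calc (v-u)^3/(12*((1:ℕ):ℝ)^2) = (v-u)^3/12 := by norm_num
        _ ≤ _ := int_sq_ge a u v huv
    · -- at least two points
      set p := γ.max' h with hp
      have hpmem : p ∈ γ := γ.max'_mem h
      set γ' := γ.erase p with hγ'
      have hcard' : γ'.card = n := by rw [hγ', Finset.card_erase_of_mem hpmem, hc]; rfl
      have h' : γ'.Nonempty := Finset.card_pos.mp (by omega)
      set q := γ'.max' h' with hq
      have hqmem' : q ∈ γ' := γ'.max'_mem h'
      have hqmem : q ∈ γ := Finset.mem_of_mem_erase hqmem'
      have hqp : q < p := lt_of_le_of_ne (γ.le_max' q hqmem) (Finset.ne_of_mem_erase hqmem')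
      set t := (q + p)/2 with ht
      -- pointwise facts
      have pw_right : ∀ x, t ≤ x → ∀ hx : γ.Nonempty,
          (x - p)^2 ≤ γ.inf' hx (fun c => (x - c)^2) := by
        intro x hx hne
        apply Finset.le_inf'
        intro c hcγ
        rcases eq_or_ne c p with rfl | hcp
        · exact le_rfl
        · have hcq : c ≤ q := γ'.le_max' c (Finset.mem_erase.mpr ⟨hcp, hcγ⟩)
          nlinarith [hqp, hx, hcq, ht]
      have pw_left : ∀ x, x ≤ t →
          γ'.inf' h' (fun c => (x - c)^2) ≤ γ.inf' h (fun c => (x - c)^2) := by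
        intro x hx
        apply Finset.le_inf'
        intro c hcγ
        rcases eq_or_ne c p with rfl | hcp
        · calc γ'.inf' h' (fun c => (x - c)^2) ≤ (x - q)^2 := Finset.inf'_le _ hqmem'
            _ ≤ (x - p)^2 := by nlinarith [hqp, hx, ht]
        · exact Finset.inf'_le _ (Finset.mem_erase.mpr ⟨hcp, hcγ⟩)
      have hcont := contF γ h
      have hcont' := contF γ' h'
      have hn2 : (2:ℝ) ≤ ((n:ℝ)+1) := by
        have : (1:ℝ) ≤ (n:ℝ) := by exact_mod_cast hn
        linarith
      rcases le_or_gt t u with htu | hut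
      · -- all of [u,v] is right of t
        calc (v-u)^3/(12*((n+1:ℕ):ℝ)^2)
            ≤ (v-u)^3/12 := by
              apply div_le_div_of_nonneg_left (pow_nonneg (by linarith) 3) (by norm_num)
              push_cast
              nlinarith [hn2]
          _ ≤ ∫ x in u..v, (x - p)^2 := int_sq_ge p u v huv
          _ ≤ ∫ x in u..v, γ.inf' h (fun c => (x - c)^2) := by
              apply intervalIntegral.integral_mono_on huv
                (((continuous_id.sub continuous_const).pow 2).intervalIntegrable u v)
                (hcont.intervalIntegrable u v)
              intro x hxm
              exact pw_right x (le_trans htu hxm.1) h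
      · rcases le_or_gt v t with htv | htv
        · -- all of [u,v] is left of t
          have hc1 : (1:ℝ) ≤ (n:ℝ) := by exact_mod_cast hn
          calc (v-u)^3/(12*((n+1:ℕ):ℝ)^2)
              ≤ (v-u)^3/(12*(n:ℝ)^2) := by
                apply div_le_div_of_nonneg_left (pow_nonneg (by linarith) 3) (by positivity)
                push_cast; nlinarith
            _ ≤ ∫ x in u..v, γ'.inf' h' (fun c => (x - c)^2) := ih γ' h' hcard' u v huv
            _ ≤ ∫ x in u..v, γ.inf' h (fun c => (x - c)^2) := by
                apply intervalIntegral.integral_mono_on huv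
                  (hcont'.intervalIntegrable u v) (hcont.intervalIntegrable u v)
                intro x hxm
                exact pw_left x (le_trans hxm.2 htv)
        · -- split at t
          have hut' : u ≤ t := hut.le
          have htv' : t ≤ v := htv.le
          have hsplit : (∫ x in u..v, γ.inf' h (fun c => (x - c)^2))
              = (∫ x in u..t, γ.inf' h (fun c => (x - c)^2))
                + ∫ x in t..v, γ.inf' h (fun c => (x - c)^2) :=
            (intervalIntegral.integral_add_adjacent_intervals
              (hcont.intervalIntegrable u t) (hcont.intervalIntegrable t v)).symm
          have b1 : (t-u)^3/(12*(n:ℝ)^2) ≤ ∫ x in u..t, γ.inf' h (fun c => (x - c)^2) := by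
            calc (t-u)^3/(12*(n:ℝ)^2)
                ≤ ∫ x in u..t, γ'.inf' h' (fun c => (x - c)^2) := ih γ' h' hcard' u t hut'
              _ ≤ _ := by
                  apply intervalIntegral.integral_mono_on hut'
                    (hcont'.intervalIntegrable u t) (hcont.intervalIntegrable u t)
                  intro x hxm
                  exact pw_left x hxm.2
          have b2 : (v-t)^3/12 ≤ ∫ x in t..v, γ.inf' h (fun c => (x - c)^2) := by
            calc (v-t)^3/12 ≤ ∫ x in t..v, (x - p)^2 := int_sq_ge p t v htv'
              _ ≤ _ := by
                  apply intervalIntegral.integral_mono_on htv'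
                    (((continuous_id.sub continuous_const).pow 2).intervalIntegrable t v)
                    (hcont.intervalIntegrable t v)
                  intro x hxm
                  exact pw_right x hxm.1 h
          have hS := S1 ((n:ℝ)+1) (t-u) (v-u) hn2 (by linarith) (by linarith)
          rw [hsplit]
          push_cast
          have : (v-u) - (t-u) = v - t := by ring
          rw [show ((n:ℝ)+1-1) = (n:ℝ) by ring, this] at hS
          linarith
lemma far (γ : Finset ℝ) (h : γ.Nonempty) (u v w : ℝ) (huv : u ≤ v) (hvw : v ≤ w)
    (hall : ∀ c ∈ γ, w ≤ c) :
    ((w-u)^3 - (w-v)^3)/3 ≤ ∫ x in u..v, γ.inf' h (fun c => (x - c)^2) := by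
  have hmono : (∫ x in u..v, (x - w)^2) ≤ ∫ x in u..v, γ.inf' h (fun c => (x - c)^2) := by
    apply intervalIntegral.integral_mono_on huv
      ((sqcont w).intervalIntegrable u v)
      ((contF γ h).intervalIntegrable u v)
    intro x hx
    apply Finset.le_inf'
    intro c hc
    have := hall c hc
    nlinarith [hx.2]
  rw [int_sq] at hmono
  have : ((w-u)^3 - (w-v)^3)/3 = ((v-w)^3 - (u-w)^3)/3 := by ring
  linarith

lemma near (γ : Finset ℝ) (h : γ.Nonempty) (u v w : ℝ) (huv : u ≤ v) (hvw : v ≤ w)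
    (hA : (γ.filter (fun c => c < w)).Nonempty) :
    ∃ m, u ≤ m ∧ m ≤ v ∧
      (m-u)^3/(12*((γ.filter (fun c => c < w)).card:ℝ)^2) + ((w-m)^3-(w-v)^3)/3
        ≤ ∫ x in u..v, γ.inf' h (fun c => (x - c)^2) := by
  classical
  set A := γ.filter (fun c => c < w) with hAdef
  set r := A.max' hA with hr
  have hrw : r < w := by
    have hm : r ∈ A := A.max'_mem hA
    rw [hAdef] at hm
    exact (Finset.mem_filter.mp hm).2
  set t := (r + w)/2 with ht
  have memA : ∀ c, c ∈ γ → c < w → c ∈ A := by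
    intro c h1 h2
    rw [hAdef]
    exact Finset.mem_filter.mpr ⟨h1, h2⟩
  -- pointwise on the right of t
  have pw_right : ∀ x, t ≤ x → x ≤ w → (x - w)^2 ≤ γ.inf' h (fun c => (x - c)^2) := by
    intro x hx hxw
    apply Finset.le_inf'
    intro c hc
    by_cases hcw : c < w
    · have hcr : c ≤ r := A.le_max' c (memA c hc hcw)
      nlinarith [hx, hxw, hrw, hcr, ht]
    · push_neg at hcw
      nlinarith [hx, hxw, hcw]
  -- pointwise on the left of t
  have pw_left : ∀ x, x ≤ t →
      A.inf' hA (fun c => (x - c)^2) ≤ γ.inf' h (fun c => (x - c)^2) := by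
    intro x hx
    apply Finset.le_inf'
    intro c hc
    by_cases hcw : c < w
    · exact Finset.inf'_le _ (memA c hc hcw)
    · push_neg at hcw
      calc A.inf' hA (fun c => (x - c)^2) ≤ (x - r)^2 := Finset.inf'_le _ (A.max'_mem hA)
        _ ≤ (x - c)^2 := by nlinarith [hx, hrw, hcw, ht]
  have hcont := contF γ h
  have hcontA := contF A hA
  have hkey := key1 A.card A hA rfl
  rcases le_or_gt t u with htu | hut
  · refine ⟨u, le_refl u, huv, ?_⟩
    have hmono : (∫ x in u..v, (x - w)^2) ≤ ∫ x in u..v, γ.inf' h (fun c => (x - c)^2) := by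
      apply intervalIntegral.integral_mono_on huv
        ((sqcont w).intervalIntegrable u v)
        (hcont.intervalIntegrable u v)
      intro x hx
      exact pw_right x (le_trans htu hx.1) (le_trans hx.2 hvw)
    rw [int_sq] at hmono
    have e1 : (u-u)^3/(12*((A.card:ℝ))^2) = 0 := by simp
    have e2 : ((w-u)^3 - (w-v)^3)/3 = ((v-w)^3 - (u-w)^3)/3 := by ring
    linarith
  · rcases le_or_gt v t with htv | htv
    · refine ⟨v, huv, le_refl v, ?_⟩
      have hmono : (∫ x in u..v, A.inf' hA (fun c => (x - c)^2))
          ≤ ∫ x in u..v, γ.inf' h (fun c => (x - c)^2) := by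
        apply intervalIntegral.integral_mono_on huv
          (hcontA.intervalIntegrable u v) (hcont.intervalIntegrable u v)
        intro x hx
        exact pw_left x (le_trans hx.2 htv)
      have := hkey u v huv
      have e2 : ((w-v)^3 - (w-v)^3)/3 = 0 := by ring
      linarith
    · refine ⟨t, hut.le, htv.le, ?_⟩
      have hsplit : (∫ x in u..v, γ.inf' h (fun c => (x - c)^2))
          = (∫ x in u..t, γ.inf' h (fun c => (x - c)^2))
            + ∫ x in t..v, γ.inf' h (fun c => (x - c)^2) :=
        (intervalIntegral.integral_add_adjacent_intervals
          (hcont.intervalIntegrable u t) (hcont.intervalIntegrable t v)).symm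
      have b1 : (t-u)^3/(12*((A.card:ℝ))^2) ≤ ∫ x in u..t, γ.inf' h (fun c => (x - c)^2) := by
        calc (t-u)^3/(12*((A.card:ℝ))^2)
            ≤ ∫ x in u..t, A.inf' hA (fun c => (x - c)^2) := hkey u t hut.le
          _ ≤ _ := by
              apply intervalIntegral.integral_mono_on hut.le
                (hcontA.intervalIntegrable u t) (hcont.intervalIntegrable u t)
              intro x hx
              exact pw_left x hx.2
      have b2 : ((w-t)^3-(w-v)^3)/3 ≤ ∫ x in t..v, γ.inf' h (fun c => (x - c)^2) := by
        have hmono : (∫ x in t..v, (x - w)^2) ≤ ∫ x in t..v, γ.inf' h (fun c => (x - c)^2) := by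
          apply intervalIntegral.integral_mono_on htv.le
            ((sqcont w).intervalIntegrable t v)
            (hcont.intervalIntegrable t v)
          intro x hx
          exact pw_right x hx.1 (le_trans hx.2 hvw)
        rw [int_sq] at hmono
        have : ((w-t)^3 - (w-v)^3)/3 = ((v-w)^3 - (t-w)^3)/3 := by ring
        linarith
      linarith [hsplit, b1, b2]
lemma S2 (a m : ℝ) (ha : 1 ≤ a) (hm : 0 ≤ m) (hm2 : m ≤ 1/3) :
    1/(324*a^2) ≤ m^3/(12*a^2) + ((1/2-m)^3 - (1/6)^3)/3 := by
  have ha0 : (0:ℝ) < a := by linarith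
  have hR : 0 ≤ (108*a^2-27)*(m-1/3)^2 - (54*a^2+27)*m + 27*a^2 := by
    nlinarith [mul_nonneg (by nlinarith : (0:ℝ) ≤ 54*a^2+27) (sub_nonneg.2 hm2),
      mul_nonneg (by nlinarith : (0:ℝ) ≤ 108*a^2-27) (sq_nonneg (m-1/3))]
  have hQ : 0 ≤ 27*m^3 + 108*a^2*(1/2-m)^3 - a^2/2 - 1 := by
    nlinarith [mul_nonneg (sub_nonneg.2 hm2) hR]
  have key : m^3/(12*a^2) + ((1/2-m)^3 - (1/6)^3)/3 - 1/(324*a^2)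
      = (27*m^3 + 108*a^2*(1/2-m)^3 - a^2/2 - 1)/(324*a^2) := by
    field_simp
    ring
  nlinarith [div_nonneg hQ (by positivity : (0:ℝ) ≤ 324*a^2)]

lemma side1bound (γ : Finset ℝ) (h : γ.Nonempty) :
    1/(324 * ((max 1 (γ.filter (fun c => c < 1/2)).card : ℕ):ℝ)^2)
      ≤ ∫ x in (0:ℝ)..(1/3), γ.inf' h (fun c => (x - c)^2) := by
  classical
  by_cases hA : (γ.filter (fun c => c < (1/2:ℝ))).Nonempty
  · obtain ⟨m, hm0, hm1, hle⟩ := near γ h 0 (1/3) (1/2) (by norm_num) (by norm_num) hA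
    set a := (γ.filter (fun c => c < (1/2:ℝ))).card with hadef
    have ha1 : 1 ≤ a := Finset.card_pos.mpr hA
    have hmax : max 1 a = a := max_eq_right ha1
    rw [hmax]
    have har : (1:ℝ) ≤ (a:ℝ) := by exact_mod_cast ha1
    have hS := S2 (a:ℝ) m har hm0 hm1
    have e : (m-0)^3/(12*((a:ℝ))^2) + ((1/2-m)^3-(1/2-1/3)^3)/3
        = m^3/(12*(a:ℝ)^2) + ((1/2-m)^3 - (1/6)^3)/3 := by norm_num
    rw [e] at hle
    linarith
  · -- all points are ≥ 1/2
    have hall : ∀ c ∈ γ, (1/2:ℝ) ≤ c := by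
      intro c hc
      by_contra hlt
      push_neg at hlt
      exact hA ⟨c, Finset.mem_filter.mpr ⟨hc, hlt⟩⟩
    have hfar := far γ h 0 (1/3) (1/2) (by norm_num) (by norm_num) hall
    have hempty : (γ.filter (fun c => c < (1/2:ℝ))).card = 0 := by
      rw [Finset.card_eq_zero]
      exact Finset.not_nonempty_iff_eq_empty.mp hA
    rw [hempty]
    norm_num at hfar ⊢
    linarith

lemma reflect_eq (γ : Finset ℝ) (h : γ.Nonempty) :
    (∫ x in (2/3:ℝ)..1, γ.inf' h (fun c => (x - c)^2))
      = ∫ x in (1/2:ℝ)..(5/6), (γ.image (fun c => 3/2 - c)).inf' (h.image _)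
          (fun c => (x - c)^2) := by
  classical
  have comp := intervalIntegral.integral_comp_sub_left (a := (1/2:ℝ)) (b := (5/6:ℝ))
    (fun x => γ.inf' h (fun c => (x - c)^2)) (3/2)
  have hb1 : (3/2 - 5/6 : ℝ) = 2/3 := by norm_num
  have hb2 : (3/2 - 1/2 : ℝ) = 1 := by norm_num
  rw [hb1, hb2] at comp
  rw [← comp]
  apply intervalIntegral.integral_congr
  intro x _
  show γ.inf' h (fun c => (3/2 - x - c)^2)
      = (γ.image (fun c => 3/2 - c)).inf' (h.image _) (fun c => (x - c)^2)
  rw [Finset.inf'_image]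
  apply Finset.inf'_congr h rfl
  intro c _
  simp only [Function.comp]
  ring

lemma side2bound (γ : Finset ℝ) (h : γ.Nonempty) :
    1/(324 * ((max 1 (γ.filter (fun c => ¬ c < 1/2)).card : ℕ):ℝ)^2)
      ≤ ∫ x in (2/3:ℝ)..1, γ.inf' h (fun c => (x - c)^2) := by
  classical
  rw [reflect_eq γ h]
  set δ := γ.image (fun c => 3/2 - c) with hδdef
  have hδ : δ.Nonempty := h.image _
  set b := (γ.filter (fun c => ¬ c < 1/2)).card with hbdef
  have hb1 : (1:ℝ) ≤ ((max 1 b : ℕ):ℝ) := by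
    have : 1 ≤ max 1 b := le_max_left 1 b
    exact_mod_cast this
  by_cases hA : (δ.filter (fun c => c < (1:ℝ))).Nonempty
  · obtain ⟨m, hm0, hm1, hle⟩ := near δ hδ (1/2) (5/6) 1 (by norm_num) (by norm_num) hA
    set a := (δ.filter (fun c => c < (1:ℝ))).card with hadef
    have ha1 : 1 ≤ a := Finset.card_pos.mpr hA
    -- a ≤ b : the near points of δ come from points of γ that are > 1/2
    have hab : a ≤ b := by
      rw [hadef, hbdef, hδdef]
      rw [Finset.filter_image]
      refine le_trans (Finset.card_image_le) (Finset.card_le_card ?_)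
      intro c hc
      simp only [Finset.mem_filter, Function.comp] at hc ⊢
      exact ⟨hc.1, by linarith [hc.2]⟩
    have har : (1:ℝ) ≤ (a:ℝ) := by exact_mod_cast ha1
    have habr : (a:ℝ) ≤ ((max 1 b : ℕ):ℝ) := by
      have : a ≤ max 1 b := le_trans hab (le_max_right 1 b)
      exact_mod_cast this
    have hS := S2 (a:ℝ) (m - 1/2) har (by linarith) (by linarith)
    rw [show ((1:ℝ)/2-(m-1/2)) = 1 - m from by ring] at hS
    have e : ((1-m)^3-((1:ℝ)-5/6)^3)/3 = ((1-m)^3 - (1/6)^3)/3 := by norm_num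
    rw [e] at hle
    have hdiv : 1/(324 * ((max 1 b : ℕ):ℝ)^2) ≤ 1/(324*(a:ℝ)^2) := by
      apply div_le_div_of_nonneg_left (by norm_num) (by positivity)
      nlinarith
    linarith
  · have hall : ∀ c ∈ δ, (1:ℝ) ≤ c := by
      intro c hc
      by_contra hlt
      push_neg at hlt
      exact hA ⟨c, Finset.mem_filter.mpr ⟨hc, hlt⟩⟩
    have hfar := far δ hδ (1/2) (5/6) 1 (by norm_num) (by norm_num) hall
    have hdiv : 1/(324 * ((max 1 b : ℕ):ℝ)^2) ≤ 1/324 := by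
      apply div_le_div_of_nonneg_left (by norm_num) (by norm_num)
      nlinarith
    norm_num at hfar
    linarith
lemma distortion_eq (γ : Finset ℝ) (h : γ.Nonempty) :
    distortion (mix (2/5) (unif 0 (1/3)) (unif (2/3) 1)) γ
    = 6/5 * (∫ x in (0:ℝ)..(1/3), γ.inf' h (fun c => (x - c)^2))
      + 9/5 * (∫ x in (2/3:ℝ)..1, γ.inf' h (fun c => (x - c)^2)) := by
  have hFeq : (fun x => sInf ((fun c => (x - c) ^ 2) '' (γ : Set ℝ)))
      = fun x => γ.inf' h (fun c => (x - c)^2) := by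
    funext x
    exact (Finset.inf'_eq_csInf_image γ h _).symm
  have hcont := contF γ h
  have hne1 : (ENNReal.ofReal (1/3 - 0))⁻¹ ≠ ⊤ := by
    rw [ENNReal.inv_ne_top, Ne, ENNReal.ofReal_eq_zero]
    norm_num
  have hne2 : (ENNReal.ofReal (1 - 2/3))⁻¹ ≠ ⊤ := by
    rw [ENNReal.inv_ne_top, Ne, ENNReal.ofReal_eq_zero]
    norm_num
  have hi1 : Integrable (fun x => γ.inf' h (fun c => (x - c)^2))
      (ENNReal.ofReal (2/5) • unif 0 (1/3)) := by
    apply Integrable.smul_measure _ ENNReal.ofReal_ne_top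
    exact (hcont.integrableOn_Icc).smul_measure hne1
  have hi2 : Integrable (fun x => γ.inf' h (fun c => (x - c)^2))
      (ENNReal.ofReal (1 - 2/5) • unif (2/3) 1) := by
    apply Integrable.smul_measure _ ENNReal.ofReal_ne_top
    exact (hcont.integrableOn_Icc).smul_measure hne2
  rw [distortion, hFeq, mix, integral_add_measure hi1 hi2]
  rw [unif, unif, integral_smul_measure, integral_smul_measure,
    integral_smul_measure, integral_smul_measure]
  rw [integral_Icc_eq_integral_Ioc, ← intervalIntegral.integral_of_le (by norm_num : (0:ℝ) ≤ 1/3)]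
  rw [integral_Icc_eq_integral_Ioc, ← intervalIntegral.integral_of_le (by norm_num : (2/3:ℝ) ≤ 1)]
  rw [ENNReal.toReal_inv, ENNReal.toReal_inv, ENNReal.toReal_ofReal (by norm_num : (0:ℝ) ≤ 2/5),
    ENNReal.toReal_ofReal (by norm_num : (0:ℝ) ≤ 1 - 2/5),
    ENNReal.toReal_ofReal (by norm_num : (0:ℝ) ≤ 1/3 - 0),
    ENNReal.toReal_ofReal (by norm_num : (0:ℝ) ≤ 1 - 2/3)]
  simp only [smul_eq_mul]
  norm_num
  ring

lemma gne : ({1/12, 1/4, 3/4, 11/12} : Finset ℝ).Nonempty := Finset.insert_nonempty _ _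

lemma gcard : ({1/12, 1/4, 3/4, 11/12} : Finset ℝ).card = 4 := by
  rw [Finset.card_insert_of_notMem (by norm_num),
    Finset.card_insert_of_notMem (by norm_num),
    Finset.card_insert_of_notMem (by norm_num), Finset.card_singleton]

lemma piece (u v c : ℝ) (huv : u ≤ v)
    (hpt : ∀ x ∈ Icc u v, ∀ d ∈ ({1/12, 1/4, 3/4, 11/12} : Finset ℝ), (x - c)^2 ≤ (x - d)^2)
    (hmem : c ∈ ({1/12, 1/4, 3/4, 11/12} : Finset ℝ)) :
    (∫ x in u..v, ({1/12, 1/4, 3/4, 11/12} : Finset ℝ).inf' gne (fun d => (x - d)^2))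
      = ((v-c)^3 - (u-c)^3)/3 := by
  rw [← int_sq c u v]
  apply intervalIntegral.integral_congr
  intro x hx
  rw [Set.uIcc_of_le huv] at hx
  apply le_antisymm
  · exact Finset.inf'_le _ hmem
  · exact Finset.le_inf' _ _ (hpt x hx)

lemma upper_val : distortion (mix (2/5) (unif 0 (1/3)) (unif (2/3) 1))
    ({1/12, 1/4, 3/4, 11/12} : Finset ℝ) = 1/432 := by
  rw [distortion_eq _ gne]
  have hmem : ∀ d ∈ ({1/12, 1/4, 3/4, 11/12} : Finset ℝ),
      d = 1/12 ∨ d = 1/4 ∨ d = 3/4 ∨ d = 11/12 := by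
    intro d hd
    simpa [Finset.mem_insert, Finset.mem_singleton] using hd
  have hI : ∀ u v : ℝ, IntervalIntegrable
      (fun x => ({1/12, 1/4, 3/4, 11/12} : Finset ℝ).inf' gne (fun d => (x - d)^2)) volume u v :=
    fun u v => (contF _ gne).intervalIntegrable u v
  have e1 : (∫ x in (0:ℝ)..(1/3),
      ({1/12, 1/4, 3/4, 11/12} : Finset ℝ).inf' gne (fun d => (x - d)^2)) = 1/1296 := by
    rw [← intervalIntegral.integral_add_adjacent_intervals (hI 0 (1/6)) (hI (1/6) (1/3))]
    rw [piece 0 (1/6) (1/12) (by norm_num) ?_ (by norm_num),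
        piece (1/6) (1/3) (1/4) (by norm_num) ?_ (by norm_num)]
    · norm_num
    · intro x hx d hd
      rcases hmem d hd with rfl | rfl | rfl | rfl <;> nlinarith [hx.1, hx.2]
    · intro x hx d hd
      rcases hmem d hd with rfl | rfl | rfl | rfl <;> nlinarith [hx.1, hx.2]
  have e2 : (∫ x in (2/3:ℝ)..1,
      ({1/12, 1/4, 3/4, 11/12} : Finset ℝ).inf' gne (fun d => (x - d)^2)) = 1/1296 := by
    rw [← intervalIntegral.integral_add_adjacent_intervals (hI (2/3) (5/6)) (hI (5/6) 1)]
    rw [piece (2/3) (5/6) (3/4) (by norm_num) ?_ (by norm_num),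
        piece (5/6) 1 (11/12) (by norm_num) ?_ (by norm_num)]
    · norm_num
    · intro x hx d hd
      rcases hmem d hd with rfl | rfl | rfl | rfl <;> nlinarith [hx.1, hx.2]
    · intro x hx d hd
      rcases hmem d hd with rfl | rfl | rfl | rfl <;> nlinarith [hx.1, hx.2]
  rw [e1, e2]
  norm_num

lemma lower_val (γ : Finset ℝ) (h : γ.Nonempty) (hcard : γ.card ≤ 4) :
    1/432 ≤ distortion (mix (2/5) (unif 0 (1/3)) (unif (2/3) 1)) γ := by
  classical
  rw [distortion_eq γ h]
  have h1 := side1bound γ h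
  have h2 := side2bound γ h
  have hab : (γ.filter (fun c => c < (1/2:ℝ))).card
      + (γ.filter (fun c => ¬ c < (1/2:ℝ))).card ≤ 4 := by
    rw [Finset.card_filter_add_card_filter_not]
    exact hcard
  set a := (γ.filter (fun c => c < (1/2:ℝ))).card with hadef
  set b := (γ.filter (fun c => ¬ c < (1/2:ℝ))).card with hbdef
  have ha4 : a ≤ 4 := by omega
  have hb4 : b ≤ 4 := by omega
  interval_cases a <;> interval_cases b <;>
    first
    | omega
    | (norm_num at h1 h2 ⊢; linarith)
theorem stmt14 :
    IsOptimal (mix (2/5) (unif 0 (1/3)) (unif (2/3) 1)) 4 {1/12, 1/4, 3/4, 11/12} ∧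
    quantErr (mix (2/5) (unif 0 (1/3)) (unif (2/3) 1)) 4 = 1 / 432 := by
  have hmem : (1/432 : ℝ) ∈ { v | ∃ γ : Finset ℝ, γ.Nonempty ∧ γ.card ≤ 4 ∧
      v = distortion (mix (2/5) (unif 0 (1/3)) (unif (2/3) 1)) γ } :=
    ⟨{1/12, 1/4, 3/4, 11/12}, gne, le_of_eq gcard, upper_val.symm⟩
  have hlb : ∀ v ∈ { v | ∃ γ : Finset ℝ, γ.Nonempty ∧ γ.card ≤ 4 ∧
      v = distortion (mix (2/5) (unif 0 (1/3)) (unif (2/3) 1)) γ }, (1/432 : ℝ) ≤ v := by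
    rintro v ⟨γ, hne, hc, rfl⟩
    exact lower_val γ hne hc
  have hq : quantErr (mix (2/5) (unif 0 (1/3)) (unif (2/3) 1)) 4 = 1/432 := by
    rw [quantErr]
    exact le_antisymm (csInf_le ⟨1/432, hlb⟩ hmem) (le_csInf ⟨1/432, hmem⟩ hlb)
  exact ⟨⟨gne, le_of_eq gcard, upper_val.trans hq.symm⟩, hq⟩
end

section
/- Let P = (1/100)·P₁ + (99/100)·P₂ with P₁ uniform on [0,1/3] and P₂ uniform on [2/3,1]. The distortion error of the four-point set {1/6, 13/18, 15/18, 17/18} equals 1/900; consequently the quantization error V_n ≤ 1/900 for all n ≥ 4. -/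
open MeasureTheory Set

noncomputable def f (x : ℝ) : ℝ :=
  min ((x - 1/6)^2) (min ((x - 13/18)^2) (min ((x - 15/18)^2) ((x - 17/18)^2)))

lemma f_cont : Continuous f := by unfold f; fun_prop

lemma sInf_eq_f (x : ℝ) :
    sInf ((fun c => (x - c) ^ 2) '' (({1/6, 13/18, 15/18, 17/18} : Finset ℝ) : Set ℝ)) = f x := by
  have h : ((fun c => (x - c)^2) '' (({1/6, 13/18, 15/18, 17/18} : Finset ℝ) : Set ℝ))
      = {(x-1/6)^2, (x-13/18)^2, (x-15/18)^2, (x-17/18)^2} := by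
    simp [Set.image_insert_eq]
  rw [h, csInf_insert (Set.Finite.bddBelow (by simp)) (by simp),
      csInf_insert (Set.Finite.bddBelow (by simp)) (by simp), csInf_pair]
  rfl

lemma f_left {x : ℝ} (h0 : 0 ≤ x) (h1 : x ≤ 1/3) : f x = (x - 1/6)^2 := by
  unfold f
  rw [min_eq_left (le_min (by nlinarith) (le_min (by nlinarith) (by nlinarith)))]

lemma f_r1 {x : ℝ} (h0 : 2/3 ≤ x) (h1 : x ≤ 7/9) : f x = (x - 13/18)^2 := by
  unfold f
  rw [min_eq_left (show (x-15/18)^2 ≤ (x-17/18)^2 by nlinarith),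
      min_eq_left (show (x-13/18)^2 ≤ (x-15/18)^2 by nlinarith),
      min_eq_right (by nlinarith)]

lemma f_r2 {x : ℝ} (h0 : 7/9 ≤ x) (h1 : x ≤ 8/9) : f x = (x - 15/18)^2 := by
  unfold f
  rw [min_eq_left (show (x-15/18)^2 ≤ (x-17/18)^2 by nlinarith),
      min_eq_right (show (x-15/18)^2 ≤ (x-13/18)^2 by nlinarith),
      min_eq_right (by nlinarith)]

lemma f_r3 {x : ℝ} (h0 : 8/9 ≤ x) (h1 : x ≤ 1) : f x = (x - 17/18)^2 := by
  unfold f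
  rw [min_eq_right (show (x-17/18)^2 ≤ (x-15/18)^2 by nlinarith),
      min_eq_right (show (x-17/18)^2 ≤ (x-13/18)^2 by nlinarith),
      min_eq_right (by nlinarith)]

lemma sq_int (a b c : ℝ) : ∫ x in a..b, (x - c)^2 = ((b-c)^3 - (a-c)^3)/3 := by
  rw [intervalIntegral.integral_comp_sub_right (fun x => x^2) c, integral_pow]
  norm_num

lemma int_left : ∫ x in Icc (0:ℝ) (1/3), f x = 1/324 := by
  rw [MeasureTheory.integral_Icc_eq_integral_Ioc,
      ← intervalIntegral.integral_of_le (by norm_num : (0:ℝ) ≤ 1/3)]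
  rw [intervalIntegral.integral_congr (g := fun x => (x - 1/6)^2)
    (fun x hx => by
      rw [Set.uIcc_of_le (by norm_num)] at hx
      exact f_left hx.1 hx.2)]
  rw [sq_int]; norm_num

lemma int_right : ∫ x in Icc (2/3:ℝ) 1, f x = 1/2916 := by
  rw [MeasureTheory.integral_Icc_eq_integral_Ioc,
      ← intervalIntegral.integral_of_le (by norm_num : (2/3:ℝ) ≤ 1)]
  have i1 : IntervalIntegrable f volume (2/3) (7/9) := f_cont.intervalIntegrable _ _
  have i2 : IntervalIntegrable f volume (7/9) (8/9) := f_cont.intervalIntegrable _ _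
  have i3 : IntervalIntegrable f volume (8/9) 1 := f_cont.intervalIntegrable _ _
  rw [← intervalIntegral.integral_add_adjacent_intervals (i1.trans i2) i3,
      ← intervalIntegral.integral_add_adjacent_intervals i1 i2]
  rw [intervalIntegral.integral_congr (f := f) (g := fun x => (x - 13/18)^2)
    (fun x hx => by rw [Set.uIcc_of_le (by norm_num)] at hx; exact f_r1 hx.1 hx.2)]
  rw [intervalIntegral.integral_congr (f := f) (g := fun x => (x - 15/18)^2)
    (fun x hx => by rw [Set.uIcc_of_le (by norm_num)] at hx; exact f_r2 hx.1 hx.2)]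
  rw [intervalIntegral.integral_congr (f := f) (g := fun x => (x - 17/18)^2)
    (fun x hx => by rw [Set.uIcc_of_le (by norm_num)] at hx; exact f_r3 hx.1 hx.2)]
  rw [sq_int, sq_int, sq_int]; norm_num

lemma part1 :
    distortion (mix (1/100) (unif 0 (1/3)) (unif (2/3) 1)) {1/6, 13/18, 15/18, 17/18}
      = 1 / 900 := by
  have hio : IntegrableOn f (Icc (0:ℝ) (1/3)) volume := f_cont.integrableOn_Icc
  have hio2 : IntegrableOn f (Icc (2/3:ℝ) 1) volume := f_cont.integrableOn_Icc
  have h1 : Integrable f ((ENNReal.ofReal (1/3 - 0))⁻¹ • volume.restrict (Icc (0:ℝ) (1/3))) :=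
    hio.smul_measure (by norm_num)
  have h2 : Integrable f ((ENNReal.ofReal (1 - 2/3))⁻¹ • volume.restrict (Icc (2/3:ℝ) 1)) :=
    hio2.smul_measure (by norm_num)
  rw [distortion, integral_congr_ae (Filter.Eventually.of_forall sInf_eq_f)]
  rw [mix, unif, unif, integral_add_measure
      (h1.smul_measure (by norm_num) (c := ENNReal.ofReal (1/100)))
      (h2.smul_measure (by norm_num) (c := ENNReal.ofReal (1 - 1/100)))]
  rw [integral_smul_measure, integral_smul_measure, integral_smul_measure, integral_smul_measure]
  rw [int_left, int_right]
  rw [ENNReal.toReal_ofReal (by norm_num), ENNReal.toReal_ofReal (by norm_num),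
      ENNReal.toReal_inv, ENNReal.toReal_inv,
      ENNReal.toReal_ofReal (by norm_num), ENNReal.toReal_ofReal (by norm_num)]
  norm_num

lemma distortion_nonneg (P : Measure ℝ) (γ : Finset ℝ) (h : γ.Nonempty) :
    0 ≤ distortion P γ := by
  apply integral_nonneg
  intro x
  apply le_csInf (Set.Nonempty.image _ (by exact_mod_cast h.to_set))
  rintro b ⟨c, -, rfl⟩
  exact sq_nonneg _

theorem stmt17 :
    distortion (mix (1/100) (unif 0 (1/3)) (unif (2/3) 1)) {1/6, 13/18, 15/18, 17/18}
      = 1 / 900 ∧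
    ∀ n : ℕ, 4 ≤ n →
      quantErr (mix (1/100) (unif 0 (1/3)) (unif (2/3) 1)) n ≤ 1 / 900 := by
  refine ⟨part1, fun n hn => ?_⟩
  rw [quantErr]
  apply csInf_le
  · exact ⟨0, fun v ⟨γ, hne, _, hv⟩ => hv ▸ distortion_nonneg _ γ hne⟩
  · refine ⟨{1/6, 13/18, 15/18, 17/18}, Finset.insert_nonempty _ _, ?_, part1.symm⟩
    refine le_trans ?_ hn
    refine le_trans (Finset.card_insert_le _ _) ?_
    refine Nat.succ_le_succ (le_trans (Finset.card_insert_le _ _) ?_)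
    refine Nat.succ_le_succ (le_trans (Finset.card_insert_le _ _) ?_)
    simp
end
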